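/- The differences Δ_x = P_x − P_{x−1} of the Poisson distribution of order k satisfy, for all x ≥ 0: (x+1)(x+2)/λ · Δ_{x+2} = Σ_{j=1}^{k−1} (jλ + x + 1 − j) P_{x+1−j} + k(λ − x − 2) P_{x−k+1}, where P_y = 0 for y < 0. -/

import Mathlib

open scoped BigOperators
open Real

/-- The pmf of the Poisson distribution of order `k` with parameter `lam`,
indexed by `x : ℤ` (it vanishes for `x < 0`):
`f_k(x;λ) = Σ e^{-kλ} λ^{x₁+⋯+x_k}/(x₁!⋯x_k!)` summed over all `k`-tuples of
nonnegative integers with `x₁ + 2x₂ + ⋯ + k x_k = x`. -/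
noncomputable def poissonOrderK (k : ℕ) (lam : ℝ) (x : ℤ) : ℝ :=
  ∑' t : Fin k → ℕ,
    if ((∑ i : Fin k, ((i : ℕ) + 1) * t i : ℕ) : ℤ) = x then
      Real.exp (-(k * lam)) * lam ^ (∑ i : Fin k, t i) /
        ∏ i : Fin k, (Nat.factorial (t i) : ℝ)
    else 0

/-- The difference `Δ_x = P_x - P_{x-1}`. -/
noncomputable def deltaOrderK (k : ℕ) (lam : ℝ) (x : ℤ) : ℝ :=
  poissonOrderK k lam x - poissonOrderK k lam (x - 1)

/-!
Write `P_m` as a sum over tuples `t` with `t₁ + 2t₂ + ⋯ + k t_k = m` of the weights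
`w(t) = e^{-kλ} λ^{|t|} / t!`. Raising `t_i` by one maps the tuples of level `m - i` bijectively
onto those of level `m` with `t_i ≥ 1` and multiplies the weight by `λ / (new t_i)`, so
`Σ_t t_i w(t) = λ P_{m-i}` over level `m`. Summing `i t_i` over `i` gives
`m P_m = λ Σ_{i=1}^k i P_{m-i}`, the coefficient form of `G' = λ(1 + 2z + ⋯ + k z^{k-1}) G` for the
generating function `G`. The recurrence for `Δ` is the combination
`(x + 1)·(instance at x + 2) − (x + 2)·(instance at x + 1)`, after regrouping the sums.
-/

open Finset Nat

namespace PoissonOrderK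

variable {k : ℕ}

def weightedSum (t : Fin k → ℕ) : ℕ := ∑ i : Fin k, ((i : ℕ) + 1) * t i

lemma weightedSum_add (t s : Fin k → ℕ) :
    weightedSum (t + s) = weightedSum t + weightedSum s := by
  simp only [weightedSum, Pi.add_apply, mul_add, sum_add_distrib]

lemma weightedSum_single (i : Fin k) : weightedSum (Pi.single i 1) = (i : ℕ) + 1 := by
  simp [weightedSum, Pi.single_apply]

lemma le_weightedSum (t : Fin k → ℕ) (i : Fin k) : t i ≤ weightedSum t :=
  (Nat.le_mul_of_pos_left (t i) (Nat.succ_pos i)).trans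
    (single_le_sum (f := fun j : Fin k => ((j : ℕ) + 1) * t j) (fun _ _ => zero_le _) (mem_univ i))

variable (k) in
noncomputable def term (lam : ℝ) (x : ℤ) (t : Fin k → ℕ) : ℝ :=
  if (weightedSum t : ℤ) = x then
    exp (-(k * lam)) * lam ^ (∑ i, t i) / ∏ i, ((t i)! : ℝ)
  else 0

lemma poissonOrderK_eq_tsum_term (lam : ℝ) (x : ℤ) :
    poissonOrderK k lam x = ∑' t, term k lam x t := rfl

variable {lam : ℝ}

lemma term_eq_zero_of_notMem {x : ℤ} {t : Fin k → ℕ}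
    (ht : t ∉ Fintype.piFinset fun _ => range (x.toNat + 1)) : term k lam x t = 0 := by
  refine if_neg fun hx => ht ?_
  simp only [Fintype.mem_piFinset, mem_range]
  intro i
  have := le_weightedSum t i
  omega

lemma summable_mul_term (x : ℤ) (c : (Fin k → ℕ) → ℝ) :
    Summable fun t => c t * term k lam x t :=
  summable_of_ne_finset_zero fun _ ht => by rw [term_eq_zero_of_notMem ht, mul_zero]

lemma prod_factorial_add_single (t : Fin k → ℕ) (i : Fin k) :
    ∏ j, (((t + Pi.single i 1 : Fin k → ℕ) j)! : ℝ) = ((t i : ℝ) + 1) * ∏ j, ((t j)! : ℝ) := by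
  have h : ∀ j, (((t + Pi.single i 1 : Fin k → ℕ) j)! : ℝ)
      = (Pi.mulSingle i ((t i : ℝ) + 1) : Fin k → ℝ) j * (t j)! := by
    intro j
    rcases eq_or_ne j i with rfl | hj
    · simp [Nat.factorial_succ]
    · simp [hj]
  simp only [h, prod_mul_distrib, Fintype.prod_pi_mulSingle']

lemma succ_mul_term_add_single (m : ℤ) (t : Fin k → ℕ) (i : Fin k) :
    ((t i : ℝ) + 1) * term k lam m (t + Pi.single i 1 : Fin k → ℕ)
      = lam * term k lam (m - ((i : ℕ) + 1)) t := by
  have hsum : ∑ j, (t + Pi.single i 1 : Fin k → ℕ) j = ∑ j, t j + 1 := by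
    simp [sum_add_distrib]
  have hfac : ∏ j, ((t j)! : ℝ) ≠ 0 := prod_ne_zero_iff.2 fun j _ => by positivity
  unfold term
  rw [weightedSum_add, weightedSum_single, hsum, prod_factorial_add_single]
  by_cases hm : (weightedSum t : ℤ) = m - ((i : ℕ) + 1)
  · rw [if_pos (by push_cast; omega), if_pos hm, pow_succ]
    field_simp
  · rw [if_neg (by push_cast; omega), if_neg hm, mul_zero, mul_zero]

lemma tsum_mul_term (m : ℤ) (i : Fin k) :
    ∑' t, (t i : ℝ) * term k lam m t = lam * poissonOrderK k lam (m - ((i : ℕ) + 1)) := by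
  have hsupp : (Function.support fun t : Fin k → ℕ => (t i : ℝ) * term k lam m t)
      ⊆ Set.range fun s : Fin k → ℕ => s + Pi.single i 1 := by
    intro t ht
    have hti : 1 ≤ t i := Nat.one_le_iff_ne_zero.2 fun h => ht (by simp [h])
    refine ⟨t - Pi.single i 1, tsub_add_cancel_of_le fun j => ?_⟩
    rcases eq_or_ne j i with rfl | hj
    · simpa using hti
    · simp [hj]
  rw [← (add_left_injective (Pi.single i 1)).tsum_eq hsupp, poissonOrderK_eq_tsum_term,
    ← tsum_mul_left]
  refine tsum_congr fun t => ?_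
  simpa using succ_mul_term_add_single m t i

lemma intCast_mul_term (m : ℤ) (t : Fin k → ℕ) :
    (m : ℝ) * term k lam m t = ∑ i : Fin k, ((i : ℝ) + 1) * t i * term k lam m t := by
  by_cases hm : (weightedSum t : ℤ) = m
  · simp_rw [← sum_mul, ← hm, weightedSum]
    push_cast
    ring
  · simp [term, hm]

theorem intCast_mul_poissonOrderK (m : ℤ) :
    (m : ℝ) * poissonOrderK k lam m
      = lam * ∑ i ∈ range k, ((i : ℝ) + 1) * poissonOrderK k lam (m - (i + 1)) := by
  calc (m : ℝ) * poissonOrderK k lam m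
      = ∑' t, ∑ i : Fin k, ((i : ℝ) + 1) * t i * term k lam m t := by
        rw [poissonOrderK_eq_tsum_term, ← tsum_mul_left]
        exact tsum_congr (intCast_mul_term m)
    _ = ∑ i : Fin k, ((i : ℝ) + 1) * (lam * poissonOrderK k lam (m - ((i : ℕ) + 1))) := by
        rw [Summable.tsum_finsetSum fun i _ => summable_mul_term m _]
        refine sum_congr rfl fun i _ => ?_
        simp_rw [← tsum_mul_term, ← tsum_mul_left, mul_assoc]
    _ = lam * ∑ i ∈ range k, ((i : ℝ) + 1) * poissonOrderK k lam (m - (i + 1)) := by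
        rw [mul_sum, ← Fin.sum_univ_eq_sum_range (fun i => lam * (((i : ℝ) + 1) *
          poissonOrderK k lam (m - (i + 1))))]
        exact sum_congr rfl fun i _ => by ring

/-- With `c = x` and `Q j = P_{x+1-j}`, `h0` is the recurrence at `x + 1`, and by the recurrence at
`x + 2` the left-hand side is `(x + 1)(x + 2) Δ_{x+2} / λ`. -/
lemma sum_shift_combination_eq (k : ℕ) (lam c : ℝ) (Q : ℕ → ℝ)
    (h0 : (c + 1) * Q 0 = lam * ∑ i ∈ range k, ((i : ℝ) + 1) * Q (i + 1)) :
    (c + 1) * ∑ i ∈ range k, ((i : ℝ) + 1) * Q i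
        - (c + 2) * ∑ i ∈ range k, ((i : ℝ) + 1) * Q (i + 1)
      = (∑ j ∈ Icc 1 (k - 1), ((j : ℝ) * lam + c + 1 - j) * Q j) + k * (lam - c - 2) * Q k := by
  cases k with
  | zero => simp
  | succ n =>
    have hshift : (c + 1) * ∑ i ∈ range n, ((i : ℝ) + 1 + 1) * Q (i + 1)
        - (c + 2) * ∑ i ∈ range n, ((i : ℝ) + 1) * Q (i + 1)
        + lam * ∑ i ∈ range n, ((i : ℝ) + 1) * Q (i + 1)
        = ∑ i ∈ range n, (((i : ℝ) + 1) * lam + c + 1 - (i + 1)) * Q (i + 1) := by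
      simp only [mul_sum, ← sum_sub_distrib, ← sum_add_distrib]
      exact sum_congr rfl fun i _ => by ring
    rw [sum_range_succ] at h0
    rw [Nat.add_sub_cancel, ← Ico_add_one_right_eq_Icc, sum_Ico_eq_sum_range, Nat.add_sub_cancel,
      sum_range_succ', sum_range_succ]
    simp only [add_comm 1]
    push_cast at h0 ⊢
    linear_combination h0 + hshift

end PoissonOrderK

open PoissonOrderK

theorem poissonOrderK_delta_recurrence_general (k : ℕ) (lam : ℝ) (hlam : 0 < lam)
    (x : ℕ) :
    ((x : ℝ) + 1) * ((x : ℝ) + 2) / lam * deltaOrderK k lam ((x : ℤ) + 2)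
      = (∑ j ∈ Finset.Icc 1 (k - 1),
          ((j : ℝ) * lam + (x : ℝ) + 1 - (j : ℝ)) * poissonOrderK k lam ((x : ℤ) + 1 - (j : ℤ)))
        + (k : ℝ) * (lam - (x : ℝ) - 2) * poissonOrderK k lam ((x : ℤ) - (k : ℤ) + 1) := by
  set Q : ℕ → ℝ := fun j => poissonOrderK k lam ((x : ℤ) + 1 - j)
  have hrec2 : ((x : ℝ) + 2) * poissonOrderK k lam ((x : ℤ) + 2)
      = lam * ∑ i ∈ Finset.range k, ((i : ℝ) + 1) * Q i := by
    have h := intCast_mul_poissonOrderK (k := k) (lam := lam) ((x : ℤ) + 2)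
    push_cast at h
    simp only [show ∀ i : ℕ, (x : ℤ) + 2 - (i + 1) = x + 1 - i by intro i; ring] at h
    exact h
  have hrec1 : ((x : ℝ) + 1) * Q 0
      = lam * ∑ i ∈ Finset.range k, ((i : ℝ) + 1) * Q (i + 1) := by
    have h := intCast_mul_poissonOrderK (k := k) (lam := lam) ((x : ℤ) + 1)
    push_cast at h
    simpa [Q] using h
  have hsum := sum_shift_combination_eq k lam x Q hrec1
  have hQ0 : poissonOrderK k lam ((x : ℤ) + 1) = Q 0 := by simp [Q]
  have hQk : poissonOrderK k lam ((x : ℤ) - k + 1) = Q k := by simp only [Q]; ring_nf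
  rw [deltaOrderK, show (x : ℤ) + 2 - 1 = x + 1 by ring, hQ0, hQk, div_mul_eq_mul_div,
    div_eq_iff hlam.ne']
  linear_combination ((x : ℝ) + 1) * hrec2 - ((x : ℝ) + 2) * hrec1 + lam * hsum

theorem poissonOrderK_delta_recurrence (k : ℕ) (hk : 2 ≤ k) (lam : ℝ) (hlam : 0 < lam)
    (x : ℕ) :
    ((x : ℝ) + 1) * ((x : ℝ) + 2) / lam * deltaOrderK k lam ((x : ℤ) + 2)
      = (∑ j ∈ Finset.Icc 1 (k - 1),
          ((j : ℝ) * lam + (x : ℝ) + 1 - (j : ℝ)) * poissonOrderK k lam ((x : ℤ) + 1 - (j : ℤ)))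
        + (k : ℝ) * (lam - (x : ℝ) - 2) * poissonOrderK k lam ((x : ℤ) - (k : ℤ) + 1) :=
  poissonOrderK_delta_recurrence_general k lam hlam x
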